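/- arXiv:2009.09887 — 2 statements merged into one kernel-verified Lean document; each statement's English description precedes it below -/
import Mathlib

section
/- Let n and S be positive integers, let H be an n×S complex matrix with HᴴH invertible, let h ∈ ℂⁿ, let P₀ > 0, let U := H(HᴴH)⁻¹Hᴴ, and assume (I − U)h ≠ 0. Then P₀ · ‖(I − U)h‖² is the greatest element of the set { |wᴴh|² : w ∈ ℂⁿ, wᴴw ≤ P₀, wᴴH = 0 }, and this maximum is attained by w* := (√P₀ / ‖(I − U)h‖) · (I − U)h. -/
/-!
A beamformer with `wᴴ H = 0` also has `wᴴ U = 0`, so the objective only sees the residual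
`g = (I - U) h`: `|wᴴ h| = |wᴴ g| ≤ ‖w‖ ‖g‖ ≤ √P₀ ‖g‖` by Cauchy–Schwarz. Since `U` is Hermitian
and fixes the columns of `H`, the residual itself satisfies `gᴴ H = 0`, so `g` rescaled to
power `P₀` is feasible and attains the bound.
-/

open Matrix

section Vectors

variable {ι 𝕜 : Type*} [Fintype ι] [RCLike 𝕜]

theorem star_dotProduct_self_eq_sum_norm_sq (v : ι → 𝕜) :
    star v ⬝ᵥ v = ((∑ i, ‖v i‖ ^ 2 : ℝ) : 𝕜) := by
  simp [dotProduct, RCLike.conj_mul]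

theorem norm_star_dotProduct_sq_le (w v : ι → 𝕜) :
    ‖star w ⬝ᵥ v‖ ^ 2 ≤ (∑ i, ‖w i‖ ^ 2) * ∑ i, ‖v i‖ ^ 2 := by
  have h := norm_inner_le_norm (𝕜 := 𝕜) (WithLp.toLp 2 w) (WithLp.toLp 2 v)
  rw [EuclideanSpace.inner_toLp_toLp, dotProduct_comm] at h
  simpa [EuclideanSpace.norm_sq_eq, mul_pow] using pow_le_pow_left₀ (norm_nonneg _) h 2

theorem sum_norm_sq_smul (c : 𝕜) (v : ι → 𝕜) :
    ∑ i, ‖(c • v) i‖ ^ 2 = ‖c‖ ^ 2 * ∑ i, ‖v i‖ ^ 2 := by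
  simp [norm_mul, mul_pow, Finset.mul_sum]

theorem norm_star_ofReal_smul_dotProduct_self_sq (c : ℝ) (v : ι → 𝕜) :
    ‖star ((c : 𝕜) • v) ⬝ᵥ v‖ ^ 2 = c ^ 2 * (∑ i, ‖v i‖ ^ 2) ^ 2 := by
  rw [star_smul, smul_dotProduct, star_dotProduct_self_eq_sum_norm_sq, RCLike.star_def,
    RCLike.conj_ofReal, smul_eq_mul, ← RCLike.ofReal_mul, RCLike.norm_ofReal, sq_abs, mul_pow]

end Vectors

namespace Matrix

variable {m k R : Type*} [Fintype m] [Fintype k] [DecidableEq k] [CommRing R] [StarRing R]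

noncomputable def columnProjection (H : Matrix m k R) : Matrix m m R :=
  H * (Hᴴ * H)⁻¹ * Hᴴ

variable (H : Matrix m k R)

theorem isHermitian_columnProjection : (columnProjection H).IsHermitian := by
  simp only [IsHermitian, columnProjection, conjTranspose_mul, conjTranspose_nonsing_inv,
    conjTranspose_conjTranspose, Matrix.mul_assoc]

theorem columnProjection_mul_self [Invertible (Hᴴ * H)] : columnProjection H * H = H := by
  rw [columnProjection, Matrix.mul_assoc, Matrix.mul_assoc, inv_mul_of_invertible,
    Matrix.mul_one]

theorem one_sub_columnProjection_mul_self [DecidableEq m] [Invertible (Hᴴ * H)] :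
    (1 - columnProjection H) * H = 0 := by
  rw [Matrix.sub_mul, Matrix.one_mul, columnProjection_mul_self, sub_self]

variable {H}

theorem vecMul_columnProjection_eq_zero {v : m → R} (hv : v ᵥ* H = 0) :
    v ᵥ* columnProjection H = 0 := by
  rw [columnProjection, Matrix.mul_assoc, ← vecMul_vecMul, hv, zero_vecMul]

theorem dotProduct_one_sub_columnProjection_mulVec [DecidableEq m] {v : m → R}
    (hv : v ᵥ* H = 0) (x : m → R) : v ⬝ᵥ ((1 - columnProjection H) *ᵥ x) = v ⬝ᵥ x := by
  rw [sub_mulVec, one_mulVec, dotProduct_sub, dotProduct_mulVec,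
    vecMul_columnProjection_eq_zero hv, zero_dotProduct, sub_zero]

variable (H)

theorem star_one_sub_columnProjection_mulVec_vecMul_self [DecidableEq m] [Invertible (Hᴴ * H)]
    (x : m → R) : star ((1 - columnProjection H) *ᵥ x) ᵥ* H = 0 := by
  rw [star_mulVec, conjTranspose_sub, conjTranspose_one, (isHermitian_columnProjection H).eq,
    vecMul_vecMul, one_sub_columnProjection_mul_self, vecMul_zero]

end Matrix

theorem nullSteering_isGreatest_general (n S : ℕ)
    (H : Matrix (Fin n) (Fin S) ℂ) [Invertible (Hᴴ * H)] (h : Fin n → ℂ)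
    (P₀ : ℝ) (hP₀ : 0 < P₀)
    (U : Matrix (Fin n) (Fin n) ℂ) (hU : U = H * (Hᴴ * H)⁻¹ * Hᴴ)
    (wstar : Fin n → ℂ)
    (hwstar : wstar =
      ((Real.sqrt P₀ / Real.sqrt (∑ i, ‖((1 - U) *ᵥ h) i‖ ^ 2) : ℝ) : ℂ) •
        ((1 - U) *ᵥ h)) :
    IsGreatest
      {x : ℝ | ∃ w : Fin n → ℂ, (∑ i, ‖w i‖ ^ 2) ≤ P₀ ∧ star w ᵥ* H = 0 ∧
        x = ‖star w ⬝ᵥ h‖ ^ 2}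
      (P₀ * ∑ i, ‖((1 - U) *ᵥ h) i‖ ^ 2) ∧
    ‖star wstar ⬝ᵥ h‖ ^ 2 = P₀ * ∑ i, ‖((1 - U) *ᵥ h) i‖ ^ 2 := by
  obtain rfl : U = columnProjection H := hU
  subst hwstar
  set g := (1 - columnProjection H) *ᵥ h
  set K := ∑ i, ‖g i‖ ^ 2
  set c := Real.sqrt P₀ / Real.sqrt K
  have hK : 0 ≤ K := by positivity
  have hc : c ^ 2 = P₀ / K := by rw [div_pow, Real.sq_sqrt hP₀.le, Real.sq_sqrt hK]
  have hgH : star g ᵥ* H = 0 := star_one_sub_columnProjection_mulVec_vecMul_self H h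
  have hcgH : star ((c : ℂ) • g) ᵥ* H = 0 := by rw [star_smul, smul_vecMul, hgH, smul_zero]
  have hreduce : ∀ w : Fin n → ℂ, star w ᵥ* H = 0 → star w ⬝ᵥ h = star w ⬝ᵥ g :=
    fun w hw ↦ (dotProduct_one_sub_columnProjection_mulVec hw h).symm
  have hvalue : ‖star ((c : ℂ) • g) ⬝ᵥ h‖ ^ 2 = P₀ * K := by
    rw [hreduce _ hcgH]
    refine (norm_star_ofReal_smul_dotProduct_self_sq c g).trans ?_
    rw [hc, sq, div_mul_eq_mul_div, mul_div_assoc, mul_self_div_self]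
  refine ⟨⟨⟨_, ?_, hcgH, hvalue.symm⟩, ?_⟩, hvalue⟩
  · rw [sum_norm_sq_smul, Complex.norm_real, Real.norm_eq_abs, sq_abs, hc]
    -- if `h` lies in the column space of `H`, then `K = 0` and `c = 0` since `x / 0 = 0`
    rcases hK.eq_or_lt with hK0 | hKpos
    · simp [← hK0, hP₀.le]
    · rw [div_mul_cancel₀ _ hKpos.ne']
  · rintro _ ⟨w, hwP, hwH, rfl⟩
    calc ‖star w ⬝ᵥ h‖ ^ 2 = ‖star w ⬝ᵥ g‖ ^ 2 := by rw [hreduce w hwH]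
      _ ≤ (∑ i, ‖w i‖ ^ 2) * K := norm_star_dotProduct_sq_le w g
      _ ≤ P₀ * K := mul_le_mul_of_nonneg_right hwP hK

/-- `P₀ · ‖(I - U) h‖²` is the greatest element of the set of values
`|wᴴ h|²` over all feasible `w` (with `wᴴ w ≤ P₀` and `wᴴ H = 0`), and this maximum
is attained by `w* = (√P₀ / ‖(I - U) h‖) (I - U) h`, where `U = H (Hᴴ H)⁻¹ Hᴴ`. -/
theorem nullSteering_isGreatest (n S : ℕ) (hn : 0 < n) (hS : 0 < S)
    (H : Matrix (Fin n) (Fin S) ℂ) [Invertible (Hᴴ * H)] (h : Fin n → ℂ)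
    (P₀ : ℝ) (hP₀ : 0 < P₀)
    (U : Matrix (Fin n) (Fin n) ℂ) (hU : U = H * (Hᴴ * H)⁻¹ * Hᴴ)
    (hne : (1 - U) *ᵥ h ≠ 0)
    (wstar : Fin n → ℂ)
    (hwstar : wstar =
      ((Real.sqrt P₀ / Real.sqrt (∑ i, ‖((1 - U) *ᵥ h) i‖ ^ 2) : ℝ) : ℂ) •
        ((1 - U) *ᵥ h)) :
    IsGreatest
      {x : ℝ | ∃ w : Fin n → ℂ, (∑ i, ‖w i‖ ^ 2) ≤ P₀ ∧ star w ᵥ* H = 0 ∧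
        x = ‖star w ⬝ᵥ h‖ ^ 2}
      (P₀ * ∑ i, ‖((1 - U) *ᵥ h) i‖ ^ 2) ∧
    ‖star wstar ⬝ᵥ h‖ ^ 2 = P₀ * ∑ i, ‖((1 - U) *ᵥ h) i‖ ^ 2 :=
  nullSteering_isGreatest_general n S H h P₀ hP₀ U hU wstar hwstar
end

section
/- Let N and M be natural numbers, U_T : Fin N → Fin M → ℝ, and U_R : Fin M → Finset (Fin N) → ℝ. For every initial matching Φ₀ : Fin N → Fin M, there exists a finite sequence of matchings Φ₀, Φ₁, …, Φ_m such that each Φ_{j+1} is obtained from Φ_j by an approved swap, and Φ_m is pairwise stable, i.e., Φ_m admits no approved swap. -/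
/-- The set of UTs matched to UR `i` under the matching `Φ`. -/
def fiber {N M : ℕ} (Φ : Fin N → Fin M) (i : Fin M) : Finset (Fin N) :=
  Finset.univ.filter (fun k => Φ k = i)

/-- The swap matching `Φ_s^t`: UTs `s` and `t` exchange partners, all other UTs
keep their partner. -/
def swapMatch {N M : ℕ} (Φ : Fin N → Fin M) (s t : Fin N) : Fin N → Fin M :=
  Function.update (Function.update Φ s (Φ t)) t (Φ s)

/-- `Φ'` is obtained from `Φ` by an approved swap of two distinct UTs: none of the
four involved agents loses utility and at least one strictly gains. -/
def ApprovedSwap {N M : ℕ} (UT : Fin N → Fin M → ℝ) (UR : Fin M → Finset (Fin N) → ℝ)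
    (Φ Φ' : Fin N → Fin M) : Prop :=
  ∃ s t : Fin N, s ≠ t ∧ Φ' = swapMatch Φ s t ∧
    UT s (Φ' s) ≥ UT s (Φ s) ∧
    UT t (Φ' t) ≥ UT t (Φ t) ∧
    UR (Φ s) (fiber Φ' (Φ s)) ≥ UR (Φ s) (fiber Φ (Φ s)) ∧
    UR (Φ t) (fiber Φ' (Φ t)) ≥ UR (Φ t) (fiber Φ (Φ t)) ∧
    (UT s (Φ' s) > UT s (Φ s) ∨ UT t (Φ' t) > UT t (Φ t) ∨
      UR (Φ s) (fiber Φ' (Φ s)) > UR (Φ s) (fiber Φ (Φ s)) ∨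
      UR (Φ t) (fiber Φ' (Φ t)) > UR (Φ t) (fiber Φ (Φ t)))

/-- Combined utility of a single agent (UT or UR) under matching `Φ`. -/
noncomputable def agentU {N M : ℕ} (UT : Fin N → Fin M → ℝ)
    (UR : Fin M → Finset (Fin N) → ℝ) (Φ : Fin N → Fin M) :
    Fin N ⊕ Fin M → ℝ
  | Sum.inl k => UT k (Φ k)
  | Sum.inr i => UR i (fiber Φ i)

/-- Total utility potential of a matching. -/
noncomputable def pot {N M : ℕ} (UT : Fin N → Fin M → ℝ)
    (UR : Fin M → Finset (Fin N) → ℝ) (Φ : Fin N → Fin M) : ℝ :=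
  ∑ x : Fin N ⊕ Fin M, agentU UT UR Φ x

lemma swapMatch_apply_ne {N M : ℕ} (Φ : Fin N → Fin M) {s t k : Fin N}
    (hks : k ≠ s) (hkt : k ≠ t) : swapMatch Φ s t k = Φ k := by
  simp [swapMatch, Function.update_of_ne hkt, Function.update_of_ne hks]

lemma swapMatch_self {N M : ℕ} (Φ : Fin N → Fin M) {s t : Fin N}
    (h : Φ s = Φ t) : swapMatch Φ s t = Φ := by
  funext k
  by_cases hkt : k = t
  · subst hkt; simp [swapMatch, h]
  by_cases hks : k = s
  · subst hks; simp [swapMatch, Function.update_of_ne, hkt, h]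
  · exact swapMatch_apply_ne Φ hks hkt

lemma fiber_swapMatch_of_ne {N M : ℕ} (Φ : Fin N → Fin M) {s t : Fin N} {i : Fin M}
    (his : i ≠ Φ s) (hit : i ≠ Φ t) :
    fiber (swapMatch Φ s t) i = fiber Φ i := by
  ext k
  simp only [fiber, Finset.mem_filter, Finset.mem_univ, true_and]
  by_cases hkt : k = t
  · subst hkt
    simp only [swapMatch, Function.update_self]
    constructor
    · intro h; exact absurd h.symm his
    · intro h; exact absurd h.symm hit
  by_cases hks : k = s
  · subst hks
    have hval : swapMatch Φ k t k = Φ t := by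
      simp [swapMatch, Function.update_of_ne hkt]
    rw [hval]
    constructor
    · intro h; exact absurd h.symm hit
    · intro h; exact absurd h.symm his
  · rw [swapMatch_apply_ne Φ hks hkt]

lemma pot_lt_of_approvedSwap {N M : ℕ} (UT : Fin N → Fin M → ℝ)
    (UR : Fin M → Finset (Fin N) → ℝ) {Φ Φ' : Fin N → Fin M}
    (h : ApprovedSwap UT UR Φ Φ') : pot UT UR Φ < pot UT UR Φ' := by
  obtain ⟨s, t, hst, hEq, h1, h2, h3, h4, hstrict⟩ := h
  by_cases hss : Φ s = Φ t
  · have : Φ' = Φ := by rw [hEq, swapMatch_self Φ hss]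
    subst this
    rcases hstrict with h | h | h | h <;> exact absurd h (lt_irrefl _)
  · apply Finset.sum_lt_sum
    · rintro (k | i) -
      · by_cases hks : k = s
        · subst hks; exact h1
        by_cases hkt : k = t
        · subst hkt; exact h2
        · apply le_of_eq
          simp only [agentU, hEq, swapMatch_apply_ne Φ hks hkt]
      · by_cases his : i = Φ s
        · subst his; exact h3
        by_cases hit : i = Φ t
        · subst hit; exact h4
        · apply le_of_eq
          simp only [agentU, hEq, fiber_swapMatch_of_ne Φ his hit]
    · rcases hstrict with h | h | h | h
      · exact ⟨Sum.inl s, Finset.mem_univ _, h⟩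
      · exact ⟨Sum.inl t, Finset.mem_univ _, h⟩
      · exact ⟨Sum.inr (Φ s), Finset.mem_univ _, h⟩
      · exact ⟨Sum.inr (Φ t), Finset.mem_univ _, h⟩

open Classical in
lemma exists_chain_aux {N M : ℕ} (UT : Fin N → Fin M → ℝ)
    (UR : Fin M → Finset (Fin N) → ℝ) :
    ∀ (n : ℕ) (Φ : Fin N → Fin M),
      (Finset.univ.filter (fun Ψ => pot UT UR Φ < pot UT UR Ψ)).card ≤ n →
      ∃ (m : ℕ) (Φs : Fin (m + 1) → Fin N → Fin M),
        Φs 0 = Φ ∧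
        (∀ j : Fin m, ApprovedSwap UT UR (Φs j.castSucc) (Φs j.succ)) ∧
        ¬ ∃ Φ' : Fin N → Fin M, ApprovedSwap UT UR (Φs (Fin.last m)) Φ' := by
  intro n
  induction n with
  | zero =>
    intro Φ hcard
    by_cases h : ∃ Φ', ApprovedSwap UT UR Φ Φ'
    · obtain ⟨Φ', hΦ'⟩ := h
      have hlt := pot_lt_of_approvedSwap UT UR hΦ'
      have : Φ' ∈ Finset.univ.filter (fun Ψ => pot UT UR Φ < pot UT UR Ψ) := by
        simp [hlt]
      have := Finset.card_pos.mpr ⟨Φ', this⟩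
      omega
    · exact ⟨0, fun _ => Φ, rfl, fun j => j.elim0, h⟩
  | succ n ih =>
    intro Φ hcard
    by_cases h : ∃ Φ', ApprovedSwap UT UR Φ Φ'
    · obtain ⟨Φ', hΦ'⟩ := h
      have hlt := pot_lt_of_approvedSwap UT UR hΦ'
      have hsub : Finset.univ.filter (fun Ψ => pot UT UR Φ' < pot UT UR Ψ) ⊂
          Finset.univ.filter (fun Ψ => pot UT UR Φ < pot UT UR Ψ) := by
        constructor
        · intro Ψ hΨ
          simp only [Finset.mem_filter, Finset.mem_univ, true_and] at hΨ ⊢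
          exact lt_trans hlt hΨ
        · intro hsub'
          have h1 : Φ' ∈ Finset.univ.filter (fun Ψ => pot UT UR Φ < pot UT UR Ψ) := by
            simp [hlt]
          have h2 := hsub' h1
          simp only [Finset.mem_filter, Finset.mem_univ, true_and] at h2
          exact lt_irrefl _ h2
      have hcard' : (Finset.univ.filter (fun Ψ => pot UT UR Φ' < pot UT UR Ψ)).card ≤ n := by
        have := Finset.card_lt_card hsub
        omega
      obtain ⟨m, Φs, hΦs0, hchain, hstable⟩ := ih Φ' hcard'
      refine ⟨m + 1, Fin.cons Φ Φs, Fin.cons_zero _ _, ?_, ?_⟩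
      · intro j
        induction j using Fin.cases with
        | zero =>
          simpa [Fin.castSucc_zero, Fin.cons_zero, Fin.cons_succ, hΦs0] using hΦ'
        | succ i =>
          have h1 : (Fin.cons Φ Φs : Fin (m + 2) → Fin N → Fin M) (i.succ).castSucc
              = Φs i.castSucc := by
            rw [← Fin.succ_castSucc, Fin.cons_succ]
          have h2 : (Fin.cons Φ Φs : Fin (m + 2) → Fin N → Fin M) (i.succ).succ
              = Φs i.succ := by rw [Fin.cons_succ]
          rw [h1, h2]
          exact hchain i
      · have : (Fin.cons Φ Φs : Fin (m + 2) → Fin N → Fin M) (Fin.last (m + 1))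
            = Φs (Fin.last m) := by
          rw [← Fin.succ_last, Fin.cons_succ]
        rw [this]
        exact hstable
    · exact ⟨0, fun _ => Φ, rfl, fun j => j.elim0, h⟩

/-- From every initial matching `Φ₀` there is a finite sequence of
approved swaps ending in a pairwise stable matching, i.e. one admitting no approved
swap: Phase II converges to a pairwise stable matching. -/
theorem exists_chain_to_pairwise_stable (N M : ℕ)
    (UT : Fin N → Fin M → ℝ) (UR : Fin M → Finset (Fin N) → ℝ)
    (Φ₀ : Fin N → Fin M) :
    ∃ (m : ℕ) (Φs : Fin (m + 1) → Fin N → Fin M),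
      Φs 0 = Φ₀ ∧
      (∀ j : Fin m, ApprovedSwap UT UR (Φs j.castSucc) (Φs j.succ)) ∧
      ¬ ∃ Φ' : Fin N → Fin M, ApprovedSwap UT UR (Φs (Fin.last m)) Φ' := by
  classical
  exact exists_chain_aux UT UR _ Φ₀ le_rfl
end
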